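/- arXiv:1807.07005 — 2 statements merged into one kernel-verified Lean document; each statement's English description precedes it below -/
import Mathlib

section
/- Property (1): for every literal u, if u ∈ S_Φ(z) then ū ∉ S_Φ(z), provided z̄ ∉ S_Φ(z) (which holds since z̄ is never added). More precisely: no step of the iteration can contain both a literal and its negation. -/
/-- A literal: a variable together with a polarity. -/
abbrev Lit (V : Type*) := V × Bool

/-- A clause: a finite set of literals. -/
abbrev Clause (V : Type*) := Finset (Lit V)

/-- Negation of a literal. -/
def Lit.neg {V : Type*} (l : Lit V) : Lit V := (l.1, !l.2)

/-- `[S]_F`: the set of clauses of `F` containing at least one literal of `S`. -/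
def bracket {V : Type*} (F : Finset (Clause V)) (S : Set (Lit V)) : Set (Clause V) :=
  {C | C ∈ F ∧ ∃ l ∈ S, l ∈ C}

/-- `⟨S⟩_{Φ,z}`: the existential literals `u ≠ z̄` with `z ≤ u`,
`[{u}]_F ⊄ [S]_F` and `[{ū}]_F ⊆ [S]_F`.  Here `E` is the predicate
"is an existential literal" and `le` the order on literals. -/
def angle {V : Type*} (F : Finset (Clause V)) (E : Lit V → Prop)
    (le : Lit V → Lit V → Prop) (z : Lit V) (S : Set (Lit V)) : Set (Lit V) :=
  {u | E u ∧ u ≠ Lit.neg z ∧ le z u ∧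
    ¬ (bracket F {u} ⊆ bracket F S) ∧ bracket F {Lit.neg u} ⊆ bracket F S}

/-- The iteration `S_Φ^k(z)`. -/
def iterS {V : Type*} (F : Finset (Clause V)) (E : Lit V → Prop)
    (le : Lit V → Lit V → Prop) (z : Lit V) : ℕ → Set (Lit V)
  | 0 => {z}
  | k + 1 => iterS F E le z k ∪ angle F E le z (iterS F E le z k)


lemma Lit.neg_neg {V : Type*} (u : Lit V) : Lit.neg (Lit.neg u) = u := by
  simp [Lit.neg]

lemma Lit.neg_ne_self {V : Type*} (u : Lit V) : Lit.neg u ≠ u := by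
  simp [Lit.neg, Prod.ext_iff]

lemma bracket_mono {V : Type*} (F : Finset (Clause V)) {S T : Set (Lit V)}
    (h : S ⊆ T) : bracket F S ⊆ bracket F T := by
  rintro C ⟨hC, l, hl, hlC⟩
  exact ⟨hC, l, h hl, hlC⟩

lemma bracket_singleton_subset {V : Type*} (F : Finset (Clause V)) {u : Lit V}
    {S : Set (Lit V)} (h : u ∈ S) : bracket F {u} ⊆ bracket F S := by
  apply bracket_mono
  simpa using h

lemma iterS_invariant {V : Type*} (F : Finset (Clause V))
    (E : Lit V → Prop) (le : Lit V → Lit V → Prop) (z : Lit V) :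
    ∀ k : ℕ, ∀ u : Lit V, u ∈ iterS F E le z k →
      u = z ∨ bracket F {Lit.neg u} ⊆ bracket F (iterS F E le z k) := by
  intro k
  induction k with
  | zero => intro u hu; left; simpa [iterS] using hu
  | succ k ih =>
    intro u hu
    have hmono : iterS F E le z k ⊆ iterS F E le z (k+1) := by
      intro x hx; exact Or.inl hx
    rcases hu with hu | hu
    · rcases ih u hu with h | h
      · exact Or.inl h
      · exact Or.inr (h.trans (bracket_mono F hmono))
    · exact Or.inr (hu.2.2.2.2.trans (bracket_mono F hmono))

theorem iterS_no_complementary_pair {V : Type*} (F : Finset (Clause V))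
    (E : Lit V → Prop) (le : Lit V → Lit V → Prop) (z : Lit V) :
    ∀ k : ℕ, ∀ u : Lit V, u ∈ iterS F E le z k → Lit.neg u ∉ iterS F E le z k := by
  intro k
  induction k with
  | zero =>
    intro u hu hnu
    simp only [iterS, Set.mem_singleton_iff] at hu hnu
    subst hu
    exact Lit.neg_ne_self u hnu
  | succ k ih =>
    intro u hu hnu
    rcases hu with hu | hu <;> rcases hnu with hnu | hnu
    · exact ih u hu hnu
    · rcases iterS_invariant F E le z k u hu with h | h
      · exact hnu.2.1 (by rw [h])
      · exact hnu.2.2.2.1 h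
    · rcases iterS_invariant F E le z k (Lit.neg u) hnu with h | h
      · exact hu.2.1 (by rw [← h, Lit.neg_neg])
      · rw [Lit.neg_neg] at h
        exact hu.2.2.2.1 h
    · exact hnu.2.2.2.1 hu.2.2.2.2
end

section
/- Property (2): let C_Φ(z) = [S_Φ(z)]_F. For every existential literal u with u ≠ z, u ≠ z̄, and z ≤ u: if [{u}]_F ⊆ C_Φ(z) then [{ū}]_F ⊆ C_Φ(z). -/
theorem property_two {V : Type*} (F : Finset (Clause V)) (E : Lit V → Prop)
    (le : Lit V → Lit V → Prop) (z : Lit V) (S : Set (Lit V))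
    -- `S = S_Φ(z)` is the stabilized value of the iteration:
    (hS : ∃ N : ℕ, S = iterS F E le z N ∧ angle F E le z S ⊆ S)
    -- the order and the existential predicate depend only on the variable of a literal:
    (hle : ∀ u : Lit V, le z u → le z (Lit.neg u))
    (hE : ∀ u : Lit V, E u → E (Lit.neg u)) :
    ∀ u : Lit V, E u → u ≠ z → u ≠ Lit.neg z → le z u →
      bracket F {u} ⊆ bracket F S → bracket F {Lit.neg u} ⊆ bracket F S := by
  intro u hEu huz hunz hzu hsub
  by_contra hnot
  obtain ⟨N, hSN, hfix⟩ := hS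
  have hneg : Lit.neg (Lit.neg u) = u := by
    simp [Lit.neg]
  have hmem : Lit.neg u ∈ angle F E le z S := by
    refine ⟨hE u hEu, ?_, hle u hzu, hnot, by rwa [hneg]⟩
    intro h
    apply huz
    have : u = z := by
      have := congrArg Lit.neg h
      simpa [Lit.neg] using this
    exact this
  have hmemS : Lit.neg u ∈ S := hfix hmem
  exact hnot (fun C hC => ⟨hC.1, Lit.neg u, hmemS, by
    obtain ⟨_, l, hl, hlC⟩ := hC
    simp at hl; subst hl; exact hlC⟩)
end
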